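/- arXiv:0907.0432 — 3 statements merged into one kernel-verified Lean document; each statement's English description precedes it below -/
import Mathlib

section
/- Let p ≥ 2 and let λ₁,…,λ_p be distinct real numbers. Let f : ℝ → ℂ be differentiable at each λ_i. For each i ∈ {1,…,p} define, for s near λ_i, g_i(s) = Σ_{j∈{1,…,p}\{i}} f(λ_j) / (∏_{k∈{1,…,p}\{i,j}} (λ_j − λ_k) · (λ_j − s)) + f(s) / ∏_{k∈{1,…,p}\{i}} (s − λ_k), so that g_i′(λ_i) is the divided difference Δ^{(p)}_{λ₁,…,λ_p,λ_i}(f) with the knot λ_i repeated. Then Σ_{i=1}^p g_i′(λ_i) = Σ_{i=1}^p f′(λ_i)/∏_{k∈{1,…,p}\{i}}(λ_i − λ_k); that is, Σ_{i=1}^p Δ^{(p)}_{λ₁,…,λ_p,λ_i}(f) = Δ^{(p−1)}_{λ₁,…,λ_p}(f′). -/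
open Finset

/-!
Write `ω'(λ_i) = ∏_{k ≠ i} (λ_i - λ_k)`. Differentiating `g_i` at `λ_i` term by term, the `j`-th
term contributes `f(λ_j) / (ω'(λ_j) (λ_j - λ_i))`, while the last term contributes, through the
logarithmic derivative `Σ_{k ≠ i} 1/(λ_i - λ_k)` of `∏_{k ≠ i} (s - λ_k)`,
`f'(λ_i)/ω'(λ_i) - Σ_{k ≠ i} f(λ_i) / (ω'(λ_i) (λ_i - λ_k))`.
Summed over `i`, the two double sums run over the same ordered pairs with the roles of the
indices swapped, so they cancel and only `Σ_i f'(λ_i)/ω'(λ_i)` remains.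
-/

section

variable {ι : Type*} [DecidableEq ι]

theorem hasDerivAt_prod_sub (t : Finset ι) (l : ι → ℝ) (x : ℝ) :
    HasDerivAt (fun s => ∏ k ∈ t, (s - l k)) (∑ k ∈ t, ∏ m ∈ t.erase k, (x - l m)) x := by
  simpa using HasDerivAt.fun_finsetProd (u := t) (f := fun k s => s - l k) (f' := fun _ => 1)
    (fun k _ => (hasDerivAt_id x).sub_const (l k))

theorem sum_prod_erase_div_prod {t : Finset ι} {l : ι → ℝ} {x : ℝ} (hx : ∀ k ∈ t, x ≠ l k) :
    (∑ k ∈ t, ∏ m ∈ t.erase k, (x - l m)) / ∏ k ∈ t, (x - l k) = ∑ k ∈ t, (x - l k)⁻¹ := by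
  rw [sum_div]
  refine sum_congr rfl fun k hk => ?_
  have hprod : ∏ m ∈ t.erase k, (x - l m) ≠ 0 :=
    prod_ne_zero_iff.2 fun m hm => sub_ne_zero.2 (hx m (mem_of_mem_erase hm))
  rw [← mul_prod_erase t _ hk, div_mul_cancel_right₀ hprod]

theorem hasDerivAt_div_prod_sub {f : ℝ → ℂ} {t : Finset ι} {l : ι → ℝ} {x : ℝ}
    (hf : DifferentiableAt ℝ f x) (hx : ∀ k ∈ t, x ≠ l k) :
    HasDerivAt (fun s => f s / ((∏ k ∈ t, (s - l k) : ℝ) : ℂ))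
      (deriv f x / ((∏ k ∈ t, (x - l k) : ℝ) : ℂ)
        - ∑ k ∈ t, f x / (((∏ m ∈ t, (x - l m)) * (x - l k) : ℝ) : ℂ)) x := by
  have hP : ((∏ k ∈ t, (x - l k) : ℝ) : ℂ) ≠ 0 :=
    Complex.ofReal_ne_zero.2 (prod_ne_zero_iff.2 fun k hk => sub_ne_zero.2 (hx k hk))
  refine (hf.hasDerivAt.fun_div (hasDerivAt_prod_sub t l x).ofReal_comp hP).congr_deriv ?_
  calc _ = deriv f x / ((∏ k ∈ t, (x - l k) : ℝ) : ℂ) - f x / ((∏ k ∈ t, (x - l k) : ℝ) : ℂ) *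
        (((∑ k ∈ t, ∏ m ∈ t.erase k, (x - l m)) / ∏ k ∈ t, (x - l k) : ℝ) : ℂ) := by
        rw [Complex.ofReal_div]
        field_simp
    _ = _ := by
        rw [sum_prod_erase_div_prod hx]
        push_cast
        simp only [mul_sum, ← div_eq_mul_inv, div_div]

theorem hasDerivAt_const_div_mul_sub (z : ℂ) {c a x : ℝ} (h : c * (a - x) ≠ 0) :
    HasDerivAt (fun s : ℝ => z / ((c * (a - s) : ℝ) : ℂ))
      (z / ((c * (a - x) * (a - x) : ℝ) : ℂ)) x := by
  have hlin : HasDerivAt (fun s : ℝ => c * (a - s)) (-c) x := by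
    simpa using ((hasDerivAt_id x).const_sub a).const_mul c
  refine ((hasDerivAt_const x z).fun_div hlin.ofReal_comp
    (Complex.ofReal_ne_zero.2 h)).congr_deriv ?_
  have hc : (c : ℂ) ≠ 0 := by exact_mod_cast left_ne_zero_of_mul h
  have ha : (a : ℂ) - x ≠ 0 := by exact_mod_cast right_ne_zero_of_mul h
  push_cast
  field_simp
  ring

theorem sum_sum_erase_comm [Fintype ι] {M : Type*} [AddCommMonoid M] (g : ι → ι → M) :
    ∑ i, ∑ j ∈ univ.erase i, g j i = ∑ i, ∑ j ∈ univ.erase i, g i j :=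
  sum_comm' fun i j => by simp [ne_comm]

end

section

variable {ι : Type*} [Fintype ι] [DecidableEq ι] {l : ι → ℝ}

def nodalDeriv (l : ι → ℝ) (i : ι) : ℝ := ∏ k ∈ univ.erase i, (l i - l k)

theorem nodalDeriv_ne_zero (hl : Function.Injective l) (i : ι) : nodalDeriv l i ≠ 0 :=
  prod_ne_zero_iff.2 fun _ hk => sub_ne_zero.2 (hl.ne (mem_erase.1 hk).1.symm)

theorem nodalDeriv_eq_prod_mul {i j : ι} (hji : j ≠ i) :
    nodalDeriv l j = (∏ k ∈ (univ.erase i).erase j, (l j - l k)) * (l j - l i) := by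
  rw [nodalDeriv, ← mul_prod_erase _ _ (mem_erase.2 ⟨hji.symm, mem_univ i⟩), erase_right_comm,
    mul_comm]

theorem hasDerivAt_repeatedKnot (hl : Function.Injective l) {f : ℝ → ℂ} {i : ι}
    (hf : DifferentiableAt ℝ f (l i)) :
    HasDerivAt
      (fun s : ℝ =>
        (∑ j ∈ univ.erase i, f (l j) /
            (((∏ k ∈ (univ.erase i).erase j, (l j - l k)) * (l j - s) : ℝ) : ℂ))
          + f s / ((∏ k ∈ univ.erase i, (s - l k) : ℝ) : ℂ))
      (∑ j ∈ univ.erase i, f (l j) / ((nodalDeriv l j * (l j - l i) : ℝ) : ℂ)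
        + (deriv f (l i) / (nodalDeriv l i : ℂ)
          - ∑ j ∈ univ.erase i, f (l i) / ((nodalDeriv l i * (l i - l j) : ℝ) : ℂ))) (l i) := by
  refine .add (.fun_sum fun j hj => ?_)
    (hasDerivAt_div_prod_sub hf fun k hk => hl.ne (mem_erase.1 hk).1.symm)
  have hji := (mem_erase.1 hj).1
  rw [nodalDeriv_eq_prod_mul hji]
  exact hasDerivAt_const_div_mul_sub _ (nodalDeriv_eq_prod_mul hji ▸ nodalDeriv_ne_zero hl j)

end

theorem stmt2_general (p : ℕ) (l : Fin p → ℝ) (hl : Function.Injective l)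
    (f : ℝ → ℂ) (hf : ∀ i, DifferentiableAt ℝ f (l i))
    (d : Fin p → ℂ)
    (hd : ∀ i : Fin p, HasDerivAt
      (fun s : ℝ =>
        (∑ j ∈ univ.erase i, f (l j) /
            (((∏ k ∈ (univ.erase i).erase j, (l j - l k)) * (l j - s) : ℝ) : ℂ))
          + f s / ((∏ k ∈ univ.erase i, (s - l k) : ℝ) : ℂ))
      (d i) (l i)) :
    ∑ i : Fin p, d i
      = ∑ i : Fin p, deriv f (l i) / ((∏ k ∈ univ.erase i, (l i - l k) : ℝ) : ℂ) := by
  have hd_eq i := (hd i).unique (hasDerivAt_repeatedKnot hl (hf i))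
  rw [sum_congr rfl fun i _ => hd_eq i, sum_add_distrib, sum_sub_distrib,
    sum_sum_erase_comm fun i j => f (l i) / ((nodalDeriv l i * (l i - l j) : ℝ) : ℂ),
    add_sub_cancel]
  rfl

/-- Sum of repeated-knot divided differences equals divided difference of `f'`:
if for each `i` the number `d i` is the derivative at `s = λ i` of
`s ↦ ∑_{j ≠ i} f (λ j)/(∏_{k∉{i,j}}(λ j - λ k) * (λ j - s)) + f s/∏_{k ≠ i}(s - λ k)`
(i.e. `d i = Δ^{(p)}_{λ₁,…,λ_p,λ_i}(f)`), then
`∑ i, d i = ∑ i, f'(λ i)/∏_{k ≠ i}(λ i - λ k) = Δ^{(p-1)}_{λ₁,…,λ_p}(f')`. -/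
theorem stmt2 (p : ℕ) (hp : 2 ≤ p) (l : Fin p → ℝ) (hl : Function.Injective l)
    (f : ℝ → ℂ) (hf : ∀ i, DifferentiableAt ℝ f (l i))
    (d : Fin p → ℂ)
    (hd : ∀ i : Fin p, HasDerivAt
      (fun s : ℝ =>
        (∑ j ∈ univ.erase i, f (l j) /
            (((∏ k ∈ (univ.erase i).erase j, (l j - l k)) * (l j - s) : ℝ) : ℂ))
          + f s / ((∏ k ∈ univ.erase i, (s - l k) : ℝ) : ℂ))
      (d i) (l i)) :
    ∑ i : Fin p, d i
      = ∑ i : Fin p, deriv f (l i) / ((∏ k ∈ univ.erase i, (l i - l k) : ℝ) : ℂ) :=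
  stmt2_general p l hl f hf d hd
end

section
/- Let p ≥ 1 and let λ₁,…,λ_{p+1} be distinct real numbers. Define K : ℝ → ℝ by K(t) = Σ_{j=1}^{p+1} (λ_j − t)_+^p / ∏_{k≠j}(λ_j − λ_k). Then K is decreasing (antitone) on ℝ; K(t) = 1 for all t < min_{1≤k≤p+1} λ_k; and K(t) = 0 for all t ≥ max_{1≤k≤p+1} λ_k. -/
open Finset

/-!
Write `[s] f` for the divided difference of `f` at the knots `s`, so that `K = [λ] (· - t)_+^p`.
Splitting `z - t = (z - x) + (x - t)` gives the recurrence
`(y - x) [s] ((· - t) f) = (t - x) [s \ y] f + (y - t) [s \ x] f` for knots `x, y ∈ s`. When `x`, `y`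
are the extreme knots and `t ∈ [x, y]`, it writes the spline of degree `d + 1` as a combination
with nonnegative weights of two splines of degree `d`. By induction on `d` this makes the B-spline
(degree `d`, `d + 2` knots) nonnegative and then, since `(y - x) [s] f = [s \ x] f - [s \ y] f`,
the spline of degree `d + 1` on `d + 2` knots antitone. Left of all knots, `K` is the `p`-th
divided difference of the monic polynomial `(· - t)^p`, namely `1`; right of them every term
vanishes.
-/

lemma antitone_of_antitoneOn_Icc {α β : Type*} [LinearOrder α] [Preorder β] {a b : α}
    (hab : a ≤ b) {f : α → β} (hf : AntitoneOn f (Set.Icc a b)) (ha : ∀ x < a, f x = f a)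
    (hb : ∀ x, b < x → f x = f b) : Antitone f := by
  rw [← Set.IccExtend_eq_self hab f ha hb]
  exact fun x y hxy => hf (Set.projIcc a b hab x).2 (Set.projIcc a b hab y).2
    (Set.monotone_projIcc hab hxy)

variable {𝕜 : Type*}

section DivDiff

variable [Field 𝕜] [DecidableEq 𝕜] {s : Finset 𝕜} {x y : 𝕜}

def divDiff (s : Finset 𝕜) (f : 𝕜 → 𝕜) : 𝕜 :=
  ∑ x ∈ s, f x / ∏ y ∈ s.erase x, (x - y)

lemma divDiff_congr {f g : 𝕜 → 𝕜} (h : ∀ x ∈ s, f x = g x) : divDiff s f = divDiff s g :=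
  sum_congr rfl fun x hx => by rw [h x hx]

@[simp]
lemma divDiff_singleton (x : 𝕜) (f : 𝕜 → 𝕜) : divDiff {x} f = f x := by
  simp [divDiff]

lemma divDiff_image {ι : Type*} [DecidableEq ι] {l : ι → 𝕜} (hl : Function.Injective l)
    (u : Finset ι) (f : 𝕜 → 𝕜) :
    divDiff (u.image l) f = ∑ j ∈ u, f (l j) / ∏ k ∈ u.erase j, (l j - l k) := by
  rw [divDiff, sum_image fun _ _ _ _ h => hl h]
  refine sum_congr rfl fun j _ => ?_
  rw [← image_erase hl, prod_image fun _ _ _ _ h => hl h]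

lemma divDiff_sub_mul (hx : x ∈ s) (a : 𝕜) (f : 𝕜 → 𝕜) :
    divDiff s (fun z => (z - a) * f z) = divDiff (s.erase x) f + (x - a) * divDiff s f := by
  -- `z - a = (z - x) + (x - a)`, and `z - x` cancels against the denominator
  have hsplit : divDiff s (fun z => (z - a) * f z) - (x - a) * divDiff s f
      = ∑ z ∈ s, (z - x) * f z / ∏ y ∈ s.erase z, (z - y) := by
    rw [divDiff, divDiff, mul_sum, ← sum_sub_distrib]
    exact sum_congr rfl fun z _ => by ring
  have hcancel : ∀ z ∈ s.erase x, (z - x) * f z / ∏ y ∈ s.erase z, (z - y)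
      = f z / ∏ y ∈ (s.erase x).erase z, (z - y) := by
    intro z hz
    have hzx := ne_of_mem_erase hz
    rw [erase_right_comm, ← mul_prod_erase (s.erase z) (fun y => z - y)
      (mem_erase.2 ⟨hzx.symm, hx⟩), mul_div_mul_left _ _ (sub_ne_zero_of_ne hzx)]
  rw [← sum_erase s (a := x) (by simp), sum_congr rfl hcancel] at hsplit
  change _ = divDiff (s.erase x) f at hsplit
  linear_combination hsplit

lemma sub_mul_divDiff (hx : x ∈ s) (hy : y ∈ s) (f : 𝕜 → 𝕜) :
    (x - y) * divDiff s f = divDiff (s.erase y) f - divDiff (s.erase x) f := by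
  linear_combination divDiff_sub_mul hy 0 f - divDiff_sub_mul hx 0 f

lemma sub_mul_divDiff_sub_mul (hx : x ∈ s) (hy : y ∈ s) (a : 𝕜) (f : 𝕜 → 𝕜) :
    (y - x) * divDiff s (fun z => (z - a) * f z)
      = (a - x) * divDiff (s.erase y) f + (y - a) * divDiff (s.erase x) f := by
  linear_combination (y - x) * divDiff_sub_mul hy a f + (y - a) * sub_mul_divDiff hy hx f

lemma divDiff_one (s : Finset 𝕜) : divDiff s (fun _ => 1) = if s.card = 1 then 1 else 0 := by
  induction s using Finset.strongInduction with
  | H s ih =>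
    rcases Nat.lt_or_ge 1 s.card with hs | hs
    · obtain ⟨x, hx, y, hy, hxy⟩ := one_lt_card.mp hs
      have key := sub_mul_divDiff hx hy fun _ => 1
      rw [ih _ (erase_ssubset hy), ih _ (erase_ssubset hx), card_erase_of_mem hx,
        card_erase_of_mem hy, sub_self] at key
      rw [if_neg hs.ne']
      exact (mul_eq_zero.mp key).resolve_left (sub_ne_zero_of_ne hxy)
    · interval_cases h : s.card
      · simp [card_eq_zero.mp h, divDiff]
      · obtain ⟨x, rfl⟩ := card_eq_one.mp h
        simp

lemma divDiff_sub_pow (a : 𝕜) {d : ℕ} (hd : d + 1 ≤ s.card) :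
    divDiff s (fun z => (z - a) ^ d) = if s.card = d + 1 then 1 else 0 := by
  induction d generalizing s with
  | zero => simpa using divDiff_one s
  | succ d ih =>
    obtain ⟨x, hx⟩ := card_pos.mp (by omega : 0 < s.card)
    simp_rw [pow_succ']
    rw [divDiff_sub_mul hx, ih (by rw [card_erase_of_mem hx]; omega), ih (by omega),
      card_erase_of_mem hx, if_neg (by omega : s.card ≠ d + 1), mul_zero, add_zero]
    exact if_congr (by omega) rfl rfl

end DivDiff

section TruncPow

variable [Field 𝕜] [LinearOrder 𝕜] {d : ℕ} {s : Finset 𝕜} {x y t : 𝕜}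

def truncPow (d : ℕ) (x : 𝕜) : 𝕜 := if 0 ≤ x then x ^ d else 0

lemma truncPow_of_nonneg (hx : 0 ≤ x) : truncPow d x = x ^ d := if_pos hx

lemma truncPow_of_nonpos (hd : d ≠ 0) (hx : x ≤ 0) : truncPow d x = 0 := by
  unfold truncPow
  split_ifs with h
  · rw [le_antisymm hx h, zero_pow hd]
  · rfl

lemma truncPow_succ (d : ℕ) (x : 𝕜) : truncPow (d + 1) x = x * truncPow d x := by
  unfold truncPow
  split_ifs <;> ring

def truncPowDivDiff (d : ℕ) (s : Finset 𝕜) (t : 𝕜) : 𝕜 :=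
  divDiff s fun z => truncPow d (z - t)

@[simp]
lemma truncPowDivDiff_singleton (x t : 𝕜) :
    truncPowDivDiff d {x} t = truncPow d (x - t) :=
  divDiff_singleton x _

lemma sub_mul_truncPowDivDiff (hx : x ∈ s) (hy : y ∈ s) :
    (x - y) * truncPowDivDiff d s t
      = truncPowDivDiff d (s.erase y) t - truncPowDivDiff d (s.erase x) t :=
  sub_mul_divDiff hx hy _

lemma sub_mul_truncPowDivDiff_succ (hx : x ∈ s) (hy : y ∈ s) :
    (y - x) * truncPowDivDiff (d + 1) s t
      = (t - x) * truncPowDivDiff d (s.erase y) t + (y - t) * truncPowDivDiff d (s.erase x) t := by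
  simp only [truncPowDivDiff, truncPow_succ]
  exact sub_mul_divDiff_sub_mul hx hy t _

variable [IsStrictOrderedRing 𝕜]

lemma truncPow_mono : Monotone (truncPow (𝕜 := 𝕜) d) := by
  intro x y hxy
  unfold truncPow
  split_ifs with hx hy hy
  · exact pow_le_pow_left₀ hx hxy d
  · exact absurd (hx.trans hxy) hy
  · positivity
  · rfl

lemma truncPowDivDiff_of_forall_le (ht : ∀ x ∈ s, t ≤ x) (hd : d + 1 ≤ s.card) :
    truncPowDivDiff d s t = if s.card = d + 1 then 1 else 0 := by
  rw [truncPowDivDiff, divDiff_congr fun x hx => truncPow_of_nonneg (sub_nonneg.2 (ht x hx)),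
    divDiff_sub_pow t hd]

lemma truncPowDivDiff_of_forall_ge (hd : d ≠ 0) (ht : ∀ x ∈ s, x ≤ t) :
    truncPowDivDiff d s t = 0 :=
  sum_eq_zero fun x hx => by simp only [truncPow_of_nonpos hd (sub_nonpos.2 (ht x hx)), zero_div]

theorem truncPowDivDiff_nonneg (hs : s.card = d + 2) (t : 𝕜) : 0 ≤ truncPowDivDiff d s t := by
  induction d generalizing s with
  | zero =>
    obtain ⟨x, y, hxy, rfl⟩ := card_eq_two.mp hs
    have key := sub_mul_truncPowDivDiff (d := 0) (t := t) (mem_insert_self x {y})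
      (mem_insert_of_mem (mem_singleton_self y))
    simp only [erase_insert_of_ne hxy, erase_insert_eq_erase, erase_singleton, insert_empty_eq,
      erase_eq_of_notMem (notMem_singleton.2 hxy), truncPowDivDiff_singleton] at key
    rcases hxy.lt_or_gt with h | h <;> nlinarith [truncPow_mono (d := 0) (sub_le_sub_right h.le t)]
  | succ d ih =>
    have hne : s.Nonempty := card_pos.mp (by omega)
    have hx₀ := s.min'_mem hne
    have hx₁ := s.max'_mem hne
    rcases le_or_gt t (s.min' hne) with ht | ht
    · rw [truncPowDivDiff_of_forall_le (fun z hz => ht.trans (s.min'_le z hz)) (by omega),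
        if_neg (by omega)]
    rcases le_or_gt (s.max' hne) t with ht' | ht'
    · rw [truncPowDivDiff_of_forall_ge (by omega) fun z hz => (s.le_max' z hz).trans ht']
    have hA := ih (s := s.erase (s.max' hne)) (by rw [card_erase_of_mem hx₁, hs]; rfl)
    have hB := ih (s := s.erase (s.min' hne)) (by rw [card_erase_of_mem hx₀, hs]; rfl)
    refine (mul_nonneg_iff_of_pos_left (sub_pos.2 (ht.trans ht'))).mp ?_
    rw [sub_mul_truncPowDivDiff_succ hx₀ hx₁]
    exact add_nonneg (mul_nonneg (sub_nonneg.2 ht.le) hA) (mul_nonneg (sub_nonneg.2 ht'.le) hB)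

lemma antitoneOn_truncPowDivDiff_succ (hx : x ∈ s) (hy : y ∈ s) (hxy : x < y)
    (hKx : Antitone (truncPowDivDiff d (s.erase x)))
    (hKy : Antitone (truncPowDivDiff d (s.erase y))) (hK : ∀ t, 0 ≤ truncPowDivDiff d s t) :
    AntitoneOn (truncPowDivDiff (d + 1) s) (Set.Icc x y) := by
  intro u hu v _ huv
  have hyx : 0 ≤ truncPowDivDiff d (s.erase x) v - truncPowDivDiff d (s.erase y) v := by
    rw [← sub_mul_truncPowDivDiff hy hx]
    exact mul_nonneg (sub_nonneg.2 hxy.le) (hK v)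
  refine le_of_mul_le_mul_left ?_ (sub_pos.2 hxy)
  rw [sub_mul_truncPowDivDiff_succ hx hy, sub_mul_truncPowDivDiff_succ hx hy]
  nlinarith [mul_nonneg (sub_nonneg.2 hu.1) (sub_nonneg.2 (hKy huv)),
    mul_nonneg (sub_nonneg.2 hu.2) (sub_nonneg.2 (hKx huv)), mul_nonneg (sub_nonneg.2 huv) hyx]

theorem antitone_truncPowDivDiff (hs : s.card = d + 1) : Antitone (truncPowDivDiff d s) := by
  induction d generalizing s with
  | zero =>
    obtain ⟨x, rfl⟩ := card_eq_one.mp hs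
    intro a b hab
    simpa using truncPow_mono (sub_le_sub_left hab x)
  | succ d ih =>
    have hne : s.Nonempty := card_pos.mp (by omega)
    have hx₀ := s.min'_mem hne
    have hx₁ := s.max'_mem hne
    have hlt := s.min'_lt_max'_of_card (by omega)
    have hleft : ∀ t ≤ s.min' hne, truncPowDivDiff (d + 1) s t = 1 := fun t ht => by
      rw [truncPowDivDiff_of_forall_le (fun z hz => ht.trans (s.min'_le z hz)) hs.ge, if_pos hs]
    have hright : ∀ t, s.max' hne ≤ t → truncPowDivDiff (d + 1) s t = 0 := fun t ht =>
      truncPowDivDiff_of_forall_ge d.succ_ne_zero fun z hz => (s.le_max' z hz).trans ht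
    refine antitone_of_antitoneOn_Icc hlt.le ?_ (fun t ht => ?_) (fun t ht => ?_)
    · exact antitoneOn_truncPowDivDiff_succ hx₀ hx₁ hlt
        (ih (by rw [card_erase_of_mem hx₀, hs]; rfl)) (ih (by rw [card_erase_of_mem hx₁, hs]; rfl))
        (truncPowDivDiff_nonneg hs)
    · rw [hleft t ht.le, hleft _ le_rfl]
    · rw [hright t ht.le, hright _ le_rfl]

end TruncPow

/-- The antiderivative `K(t) = ∑ j (λ_j - t)_+^p / ∏_{k≠j}(λ_j - λ_k)` of the basic spline
is antitone, equals `1` to the left of `min λ_k`, and equals `0` from `max λ_k` on. -/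
theorem stmt3 (p : ℕ) (hp : 1 ≤ p) (l : Fin (p + 1) → ℝ) (hl : Function.Injective l) :
    Antitone (fun t : ℝ =>
        ∑ j : Fin (p + 1),
          (if 0 ≤ l j - t then (l j - t) ^ p else 0) / ∏ k ∈ univ.erase j, (l j - l k))
    ∧ (∀ t : ℝ, t < univ.inf' univ_nonempty l →
        ∑ j : Fin (p + 1),
          (if 0 ≤ l j - t then (l j - t) ^ p else 0) / ∏ k ∈ univ.erase j, (l j - l k) = 1)
    ∧ (∀ t : ℝ, univ.sup' univ_nonempty l ≤ t →
        ∑ j : Fin (p + 1),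
          (if 0 ≤ l j - t then (l j - t) ^ p else 0) / ∏ k ∈ univ.erase j, (l j - l k) = 0) := by
  set s := univ.image l
  have hs : s.card = p + 1 := by rw [card_image_of_injective _ hl, card_fin]
  have hK : ∀ t, ∑ j, (if 0 ≤ l j - t then (l j - t) ^ p else 0) / ∏ k ∈ univ.erase j, (l j - l k)
      = truncPowDivDiff p s t := fun t =>
      (divDiff_image hl univ fun z => truncPow p (z - t)).symm
  simp only [hK]
  refine ⟨antitone_truncPowDivDiff hs, fun t ht => ?_,
    fun t ht => truncPowDivDiff_of_forall_ge (by omega) ?_⟩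
  · rw [truncPowDivDiff_of_forall_le ?_ hs.ge, if_pos hs]
    simpa [s] using fun j => (ht.trans_le (inf'_le l (mem_univ j))).le
  · simpa [s] using fun j => (le_sup' l (mem_univ j)).trans ht
end

section
/- Let p ≥ 1 and let λ₁,…,λ_{p+1} be distinct real numbers. Then the basic spline S(t) = Σ_{j=1}^{p+1} (λ_j − t)_+^{p−1} / ∏_{k≠j}(λ_j − λ_k) is integrable on ℝ and ∫_ℝ S(t) dt = 1/p. -/
open Finset MeasureTheory Polynomial

private lemma keyA {p : ℕ} {l : Fin (p + 1) → ℝ} (hl : Function.Injective l)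
    (P : Polynomial ℝ) (hP : P.degree < p + 1) :
    ∑ j : Fin (p + 1), P.eval (l j) / ∏ k ∈ univ.erase j, (l j - l k) = P.coeff p := by
  have hinj : Set.InjOn l (univ : Finset (Fin (p + 1))) := hl.injOn
  have hP' : P.degree < #(univ : Finset (Fin (p + 1))) := by
    rwa [card_univ, Fintype.card_fin, Nat.cast_add, Nat.cast_one]
  conv_rhs => rw [Lagrange.eq_interpolate hinj hP']
  rw [Lagrange.interpolate_apply, Polynomial.finset_sum_coeff]
  refine sum_congr rfl fun j _ => ?_
  rw [Polynomial.coeff_C_mul]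
  have hb : (Lagrange.basis univ l j).coeff p = ∏ k ∈ univ.erase j, (l j - l k)⁻¹ := by
    have hnd : (Lagrange.basis univ l j).natDegree = p := by
      rw [Lagrange.natDegree_basis hinj (mem_univ j), card_univ, Fintype.card_fin,
        Nat.add_sub_cancel]
    have hlc := Polynomial.coeff_natDegree (p := Lagrange.basis univ l j)
    rw [hnd] at hlc
    rw [hlc, Lagrange.basis, Polynomial.leadingCoeff_prod]
    refine prod_congr rfl fun k _ => ?_
    rw [Lagrange.basisDivisor, Polynomial.leadingCoeff_mul, Polynomial.leadingCoeff_C,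
      Polynomial.leadingCoeff_X_sub_C, mul_one]
  rw [hb, div_eq_mul_inv, prod_inv_distrib]

private lemma degree_lt_aux {p q : ℕ} (t : ℝ) (hq : q ≤ p) :
    ((X - C t) ^ q : ℝ[X]).degree < (p : WithBot ℕ) + 1 := by
  refine lt_of_le_of_lt (Polynomial.degree_pow_le_of_le q (Polynomial.degree_X_sub_C t).le) ?_
  rw [mul_one]
  have : ((q : ℕ) : WithBot ℕ) < ((p + 1 : ℕ) : WithBot ℕ) := by
    exact_mod_cast (by omega : q < p + 1)
  simpa using this

/-- The basic spline `S(t) = ∑ j (λ_j - t)_+^{p-1} / ∏_{k≠j}(λ_j - λ_k)` (with the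
truncated power of exponent `0` being the indicator of `[0,∞)`) is integrable on `ℝ`,
with total integral `1/p`. -/
theorem stmt11 (p : ℕ) (hp : 1 ≤ p) (l : Fin (p + 1) → ℝ) (hl : Function.Injective l) :
    Integrable (fun t : ℝ =>
        ∑ j : Fin (p + 1),
          (if 0 ≤ l j - t then (l j - t) ^ (p - 1) else 0) /
            ∏ k ∈ univ.erase j, (l j - l k))
    ∧ (∫ t : ℝ,
        ∑ j : Fin (p + 1),
          (if 0 ≤ l j - t then (l j - t) ^ (p - 1) else 0) /
            ∏ k ∈ univ.erase j, (l j - l k)) = 1 / p := by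
  classical
  set c : Fin (p + 1) → ℝ := fun j => ∏ k ∈ univ.erase j, (l j - l k) with hc
  obtain ⟨a, ha⟩ : ∃ a : ℝ, ∀ j, a ≤ l j :=
    ⟨(univ : Finset (Fin (p + 1))).inf' ⟨0, mem_univ 0⟩ l, fun j => inf'_le l (mem_univ j)⟩
  -- divided differences of polynomials of degree ≤ p - 1 vanish
  have hzero : ∀ t : ℝ, ∑ j : Fin (p + 1), (l j - t) ^ (p - 1) / c j = 0 := by
    intro t
    have h := keyA hl ((X - C t) ^ (p - 1)) (degree_lt_aux t (by omega))
    simp only [eval_pow, eval_sub, eval_X, eval_C] at h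
    have hcoeff : ((X - C t) ^ (p - 1) : ℝ[X]).coeff p = 0 := by
      refine Polynomial.coeff_eq_zero_of_natDegree_lt ?_
      rw [Polynomial.natDegree_pow, Polynomial.natDegree_X_sub_C, mul_one]
      omega
    rw [h, hcoeff]
  -- the key divided difference of (x - a)^p equals 1
  have hone : ∑ j : Fin (p + 1), (l j - a) ^ p / c j = 1 := by
    have h := keyA hl ((X - C a) ^ p) (degree_lt_aux a le_rfl)
    simp only [eval_pow, eval_sub, eval_X, eval_C] at h
    have hcoeff : ((X - C a) ^ p : ℝ[X]).coeff p = 1 := by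
      have hm : (((X - C a) : ℝ[X]) ^ p).Monic := (Polynomial.monic_X_sub_C a).pow p
      have hnd : (((X - C a) : ℝ[X]) ^ p).natDegree = p := by
        rw [Polynomial.natDegree_pow, Polynomial.natDegree_X_sub_C, mul_one]
      have hlc := hm.coeff_natDegree
      rw [hnd] at hlc
      exact hlc
    rw [h, hcoeff]
  -- the compactly supported pieces
  set h : Fin (p + 1) → ℝ → ℝ :=
    fun j => Set.indicator (Set.Icc a (l j)) (fun t => (l j - t) ^ (p - 1)) with hh
  have hfun : (fun t : ℝ => ∑ j : Fin (p + 1),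
      (if 0 ≤ l j - t then (l j - t) ^ (p - 1) else 0) / c j)
      = fun t => ∑ j, h j t / c j := by
    funext t
    rcases le_or_gt a t with hat | hat
    · refine sum_congr rfl fun j _ => ?_
      congr 1
      rw [hh]
      simp only [Set.indicator_apply, Set.mem_Icc]
      by_cases hle : t ≤ l j
      · rw [if_pos (by linarith), if_pos ⟨hat, hle⟩]
      · rw [if_neg (by push_neg; linarith), if_neg (by push_neg; intro _; linarith)]
    · have h1 : ∀ j, h j t = 0 := fun j =>
        Set.indicator_of_notMem (by simp only [Set.mem_Icc]; push_neg; intro h'; linarith) _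
      have h2 : ∀ j : Fin (p + 1), (if 0 ≤ l j - t then (l j - t) ^ (p - 1) else 0)
          = (l j - t) ^ (p - 1) := fun j => if_pos (by have := ha j; linarith)
      simp only [h2, h1, zero_div, sum_const_zero, hzero t]
  have hint : ∀ j : Fin (p + 1), Integrable (fun t => h j t / c j) := by
    intro j
    have : Integrable (h j) := by
      rw [hh]
      exact (IntegrableOn.integrable_indicator
        ((Continuous.continuousOn (by continuity)).integrableOn_Icc) measurableSet_Icc)
    simpa [div_eq_mul_inv] using this.mul_const (c j)⁻¹
  have hInt : Integrable (fun t => ∑ j, h j t / c j) :=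
    integrable_finset_sum _ fun j _ => hint j
  constructor
  · rw [hfun]; exact hInt
  · rw [hfun, integral_finset_sum _ fun j _ => hint j]
    have hI : ∀ j : Fin (p + 1), ∫ t, h j t = (l j - a) ^ p / p := by
      intro j
      rw [hh]
      rw [MeasureTheory.integral_indicator measurableSet_Icc,
        MeasureTheory.integral_Icc_eq_integral_Ioc,
        ← intervalIntegral.integral_of_le (ha j)]
      rw [intervalIntegral.integral_comp_sub_left (fun x => x ^ (p - 1)) (l j)]
      rw [sub_self, integral_pow]
      have : p - 1 + 1 = p := by omega
      rw [this]
      rw [zero_pow (by omega : p ≠ 0), sub_zero, Nat.cast_sub hp]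
      norm_num
    have : ∀ j : Fin (p + 1), (∫ t, h j t / c j) = (l j - a) ^ p / p / c j := by
      intro j
      rw [integral_div, hI j]
    rw [show (∑ j : Fin (p + 1), ∫ t, h j t / c j) = ∑ j : Fin (p + 1), (l j - a) ^ p / p / c j
      from sum_congr rfl fun j _ => this j]
    have hstep : ∑ j : Fin (p + 1), (l j - a) ^ p / p / c j
        = (∑ j : Fin (p + 1), (l j - a) ^ p / c j) / p := by
      rw [sum_div]
      exact sum_congr rfl fun j _ => by ring
    rw [hstep, hone]
end
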